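/- The commutator subgroup of G = A(n,θ) equals its center. -/

import Mathlib

noncomputable section

abbrev Fq (n : ℕ) : Type := GaloisField 2 n

instance (n : ℕ) : Fintype (Fq n) := Fintype.ofFinite _

@[ext] structure SuzukiA (n : ℕ) (θ : Fq n ≃+* Fq n) where
  a : Fq n
  b : Fq n

namespace SuzukiA

variable {n : ℕ} {θ : Fq n ≃+* Fq n}

instance : Mul (SuzukiA n θ) := ⟨fun x y => ⟨x.a + y.a, x.b + y.b + x.a * θ y.a⟩⟩
instance : One (SuzukiA n θ) := ⟨⟨0, 0⟩⟩
instance : Inv (SuzukiA n θ) := ⟨fun x => ⟨x.a, x.b + x.a * θ x.a⟩⟩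

theorem mul_def (x y : SuzukiA n θ) :
    x * y = ⟨x.a + y.a, x.b + y.b + x.a * θ y.a⟩ := rfl

@[simp] theorem one_a : (1 : SuzukiA n θ).a = 0 := rfl
@[simp] theorem one_b : (1 : SuzukiA n θ).b = 0 := rfl

instance : Group (SuzukiA n θ) where
  mul_assoc x y z := by ext <;> simp [mul_def, map_add] <;> ring
  one_mul x := by ext <;> simp [mul_def]
  mul_one x := by ext <;> simp [mul_def]
  inv_mul_cancel x := by
    have h2 : (2 : Fq n) = 0 := by
      have := CharP.cast_eq_zero (Fq n) 2
      exact_mod_cast this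
    show (⟨x.a, x.b + x.a * θ x.a⟩ * x : SuzukiA n θ) = 1
    ext
    · show x.a + x.a = 0
      linear_combination x.a * h2
    · show x.b + x.a * θ x.a + x.b + x.a * θ x.a = 0
      linear_combination (x.b + x.a * θ x.a) * h2

instance : Fintype (SuzukiA n θ) :=
  Fintype.ofEquiv (Fq n × Fq n)
    { toFun := fun p => ⟨p.1, p.2⟩
      invFun := fun x => (x.a, x.b)
      left_inv := fun _ => rfl
      right_inv := fun _ => rfl }

end SuzukiA

/-!
A commutator of `(a, _)` and `(c, _)` is `(0, a θc + c θa)`, and since `θ ≠ 1` the centre is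
`{(0, b)}`; so the commutator subgroup lies in the centre, and equality amounts to the values
`a θc + c θa` spanning `F = 𝔽_{2^n}` over `𝔽₂`. With `c = 1` they contain the image of `1 + θ`,
a hyperplane (`θ` fixes only `𝔽₂`) on which the trace vanishes. As `θ² ≠ 1` there is `c` with
`u = θc + θ⁻¹c ≠ 0`, and `a = u⁻¹` gives `Tr (a θc + c θa) = Tr (a u) = Tr 1 = n = 1`, so the span
is strictly larger than that hyperplane.
-/

open Module Subgroup

open scoped commutatorElement

def ringAutMulEquivAlgAut (F : Type*) [Semiring F] (p : ℕ) [Algebra (ZMod p) F] :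
    (F ≃+* F) ≃* (F ≃ₐ[ZMod p] F) where
  toFun θ := AlgEquiv.ofRingEquiv (f := θ) fun x =>
    RingHom.congr_fun (RingHom.ext_zmod ((θ : F →+* F).comp (algebraMap (ZMod p) F)) _) x
  invFun σ := σ.toRingEquiv
  left_inv _ := rfl
  right_inv _ := rfl
  map_mul' _ _ := rfl

section GaloisGenerator

variable {K L : Type*} [Field K] [Field L] [Algebra K L] {σ : L ≃ₐ[K] L}

theorem AlgEquiv.sq_ne_one_of_forall_mem_zpowers [FiniteDimensional K L] [IsGalois K L]
    (hσ : ∀ τ, τ ∈ zpowers σ) (hrank : 2 < finrank K L) : σ ^ 2 ≠ 1 := by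
  intro h
  have hord : orderOf σ = finrank K L := by
    rw [orderOf_eq_card_of_forall_mem_zpowers hσ, IsGalois.card_aut_eq_finrank]
  have := Nat.le_of_dvd two_pos (hord ▸ orderOf_dvd_of_pow_eq_one h)
  omega

theorem Algebra.trace_add_algEquiv_apply_self [CharP K 2] (σ : L ≃ₐ[K] L) (x : L) :
    Algebra.trace K L (x + σ x) = 0 := by
  rw [map_add, Algebra.trace_eq_of_algEquiv, CharTwo.add_self_eq_zero]

theorem exists_trace_mul_apply_add_eq_trace_one (hσ : σ ^ 2 ≠ 1) :
    ∃ a c : L, Algebra.trace K L (a * σ c + c * σ a) = Algebra.trace K L 1 := by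
  obtain ⟨c, hc⟩ : ∃ c, σ c + σ.symm c ≠ 0 := by
    by_contra! h
    have hsq : ∀ c, σ (σ c) = -c := fun c => by
      simpa [eq_neg_iff_add_eq_zero] using congrArg σ (h c)
    have h2 : (2 : L) = 0 := by simpa [one_add_one_eq_two] using (h 1)
    refine hσ (AlgEquiv.ext fun c => ?_)
    rw [pow_two, AlgEquiv.mul_apply, hsq, AlgEquiv.one_apply, neg_eq_iff_add_eq_zero, ← two_mul,
      h2, zero_mul]
  refine ⟨(σ c + σ.symm c)⁻¹, c, ?_⟩
  have hswap : c * σ (σ c + σ.symm c)⁻¹ = σ (σ.symm c * (σ c + σ.symm c)⁻¹) := by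
    rw [map_mul, AlgEquiv.apply_symm_apply]
  rw [hswap, map_add, Algebra.trace_eq_of_algEquiv, ← map_add, mul_comm (σ.symm c),
    ← mul_add, inv_mul_cancel₀ hc]

end GaloisGenerator

section BinaryField

variable {L : Type*} [Field L] [Finite L] [Algebra (ZMod 2) L] {σ : L ≃ₐ[ZMod 2] L}

theorem eq_zero_or_one_of_apply_eq_self (hσ : ∀ τ, τ ∈ zpowers σ) {x : L} (hx : σ x = x) :
    x = 0 ∨ x = 1 := by
  have hstab : zpowers σ ≤ MulAction.stabilizer _ x := zpowers_le.mpr hx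
  have hfrob : x ^ 2 = x := by
    simpa [ZMod.card] using hstab (hσ (FiniteField.frobeniusAlgEquivOfAlgebraic (ZMod 2) L))
  exact IsIdempotentElem.iff_eq_zero_or_one.mp (by rw [IsIdempotentElem, ← sq, hfrob])

theorem ker_id_add_le_span_one (hσ : ∀ τ, τ ∈ zpowers σ) :
    LinearMap.ker (LinearMap.id + σ.toLinearMap) ≤ Submodule.span (ZMod 2) {1} := by
  have : CharP L 2 := charP_of_injective_algebraMap' (ZMod 2) 2
  intro x hx
  have hsum : x + σ x = 0 := hx
  have hfix : σ x = x := by simpa using (CharTwo.add_eq_iff_eq_add.mp hsum).symm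
  rcases eq_zero_or_one_of_apply_eq_self hσ hfix with rfl | rfl
  · exact Submodule.zero_mem _
  · exact Submodule.mem_span_singleton_self 1

theorem span_mul_apply_add_eq_top (hσ : ∀ τ, τ ∈ zpowers σ) (hodd : Odd (finrank (ZMod 2) L))
    (hrank : 2 < finrank (ZMod 2) L) :
    Submodule.span (ZMod 2) (Set.range fun p : L × L => p.1 * σ p.2 + p.2 * σ p.1) = ⊤ := by
  set V := Submodule.span (ZMod 2) (Set.range fun p : L × L => p.1 * σ p.2 + p.2 * σ p.1)
  set f := LinearMap.id + σ.toLinearMap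
  have hfV : LinearMap.range f ≤ V := by
    rintro _ ⟨x, rfl⟩
    exact Submodule.subset_span ⟨(x, 1), by simp [f]⟩
  obtain ⟨a, c, hac⟩ :=
    exists_trace_mul_apply_add_eq_trace_one (AlgEquiv.sq_ne_one_of_forall_mem_zpowers hσ hrank)
  have htrace_one : Algebra.trace (ZMod 2) L 1 ≠ 0 := by
    rw [← map_one (algebraMap (ZMod 2) L), Algebra.trace_algebraMap, nsmul_one,
      ZMod.natCast_eq_one_iff_odd.mpr hodd]
    exact one_ne_zero
  have hnot : a * σ c + c * σ a ∉ LinearMap.range f := by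
    rintro ⟨x, hx⟩
    have := Algebra.trace_add_algEquiv_apply_self σ x
    rw [show x + σ x = f x from rfl, hx, hac] at this
    exact htrace_one this
  have hlt : LinearMap.range f < V :=
    SetLike.lt_iff_le_and_exists.mpr ⟨hfV, _, Submodule.subset_span ⟨(a, c), rfl⟩, hnot⟩
  have hker : finrank (ZMod 2) (LinearMap.ker f) ≤ 1 :=
    (Submodule.finrank_mono (ker_id_add_le_span_one hσ)).trans
      (finrank_span_singleton one_ne_zero).le
  have := LinearMap.finrank_range_add_finrank_ker f
  have := Submodule.finrank_lt_finrank_of_lt hlt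
  exact Submodule.eq_top_of_finrank_eq (le_antisymm (Submodule.finrank_le V) (by omega))

end BinaryField

namespace SuzukiA

variable {n : ℕ} {θ : Fq n ≃+* Fq n}

theorem commutatorElement_eq (x y : SuzukiA n θ) :
    ⁅x, y⁆ = ⟨0, x.a * θ y.a + y.a * θ x.a⟩ := by
  have h2 : (2 : Fq n) = 0 := CharTwo.two_eq_zero
  ext
  · show x.a + y.a + x.a + y.a = 0
    linear_combination (x.a + y.a) * h2
  · show x.b + y.b + x.a * θ y.a + (x.b + x.a * θ x.a) + (x.a + y.a) * θ x.a
        + (y.b + y.a * θ y.a) + (x.a + y.a + x.a) * θ y.a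
        = x.a * θ y.a + y.a * θ x.a
    linear_combination (x.b + y.b + x.a * θ x.a + y.a * θ y.a + x.a * θ y.a) * h2

def ofB : Multiplicative (Fq n) →* SuzukiA n θ where
  toFun b := ⟨0, b.toAdd⟩
  map_one' := rfl
  map_mul' b c := by ext <;> simp [mul_def]

theorem mem_center_iff (hθ : θ ≠ 1) {z : SuzukiA n θ} : z ∈ center (SuzukiA n θ) ↔ z.a = 0 := by
  refine ⟨fun hz => ?_, fun hz => Subgroup.mem_center_iff.mpr fun g => ?_⟩
  · have hcomm (c : Fq n) : c * θ z.a = z.a * θ c := by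
      simpa [mul_def, add_comm] using congrArg SuzukiA.b (Subgroup.mem_center_iff.mp hz ⟨c, 0⟩)
    by_contra hza
    have hfix : θ z.a = z.a := by simpa using hcomm 1
    refine hθ (RingEquiv.ext fun c => mul_left_cancel₀ hza ?_)
    rw [← hcomm, hfix, mul_comm]
    rfl
  · ext
    · exact add_comm _ _
    · simp [mul_def, hz, add_comm]

theorem commutator_le_center (hθ : θ ≠ 1) : commutator (SuzukiA n θ) ≤ center (SuzukiA n θ) :=
  commutator_le.mpr fun x _ y _ => (mem_center_iff hθ).mpr (by rw [commutatorElement_eq])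

theorem ofB_mem_commutator
    (hspan : Submodule.span (ZMod 2) (Set.range fun p : Fq n × Fq n => p.1 * θ p.2 + p.2 * θ p.1)
      = ⊤) (b : Multiplicative (Fq n)) : ofB b ∈ commutator (SuzukiA n θ) := by
  let B := AddSubgroup.toZModSubmodule 2 ((commutator (SuzukiA n θ)).comap ofB).toAddSubgroup'
  suffices ⊤ ≤ B from this (Submodule.mem_top (x := b.toAdd))
  rw [← hspan, Submodule.span_le]
  rintro _ ⟨⟨a, c⟩, rfl⟩
  have h := commutator_mem_commutator (mem_top (⟨a, 0⟩ : SuzukiA n θ)) (mem_top ⟨c, 0⟩)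
  rw [commutatorElement_eq] at h
  exact h

end SuzukiA

open SuzukiA in
theorem stmt5 (n : ℕ) (hn : 1 < n) (hodd : Odd n) (θ : Fq n ≃+* Fq n)
    (hθ : ∀ σ : Fq n ≃+* Fq n, σ ∈ Subgroup.zpowers θ) :
    commutator (SuzukiA n θ) = Subgroup.center (SuzukiA n θ) := by
  let e := ringAutMulEquivAlgAut (Fq n) 2
  have hσ : ∀ τ, τ ∈ zpowers (e θ) := fun τ => by
    have := mem_map_of_mem e.toMonoidHom (hθ (e.symm τ))
    rwa [MonoidHom.map_zpowers, MulEquiv.coe_toMonoidHom, MulEquiv.apply_symm_apply] at this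
  have hrank : finrank (ZMod 2) (Fq n) = n := GaloisField.finrank 2 (by omega)
  have hrank_gt : 2 < finrank (ZMod 2) (Fq n) := by
    obtain ⟨k, hk⟩ := hodd
    omega
  have hθ1 : θ ≠ 1 := fun h =>
    AlgEquiv.sq_ne_one_of_forall_mem_zpowers hσ hrank_gt (by rw [h, map_one, one_pow])
  have hspan := span_mul_apply_add_eq_top hσ (by rwa [hrank]) hrank_gt
  refine le_antisymm (commutator_le_center hθ1) fun z hz => ?_
  have hz : z = ofB (.ofAdd z.b) := SuzukiA.ext ((mem_center_iff hθ1).mp hz) rfl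
  exact hz ▸ ofB_mem_commutator hspan _
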